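/- Let (X_n) be a sequence of Banach spaces containing isomorphs of an infinite-dimensional Banach space X uniformly. Then (Σ_n X_n)₀ \ ⋃_{p>0}(Σ_n X_n)_p together with 0 contains a closed subspace of (Σ_n X_n)₀ of dimension dim X. -/

import Mathlib

open Filter Topology

/-!
Take the weights `c n = 1 / log (n + 2)` and embed `X` by `x ↦ (c n • R n x)ₙ`. Since `c n → 0`
and `‖R n x‖ ≤ δ ‖x‖`, the image lies in the `c₀`-sum. Since `(log n) ^ p` grows slower than `n`,
`∑ c n ^ p = ∞` for every `p > 0`, and `‖R n x‖ ≥ ‖x‖ / δ` makes every nonzero image fail to be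
`p`-summable. The image is closed, even for coordinatewise convergence, because the single coordinate
`x ↦ c 0 • R 0 x` is already bounded below, hence a closed embedding of the Banach space `X`.
-/

theorem Real.not_summable_inv_log_rpow {p : ℝ} (hp : 0 < p) :
    ¬ Summable fun n : ℕ => (Real.log (n + 2))⁻¹ ^ p := by
  have hbound : ∀ n : ℕ, (p ^ p)⁻¹ * ((n : ℝ) + 2)⁻¹ ≤ (Real.log (n + 2))⁻¹ ^ p := by
    intro n
    have hx : (0 : ℝ) < n + 2 := by positivity
    have hlog : 0 < Real.log (n + 2) := Real.log_pos (by linarith [n.cast_nonneg (α := ℝ)])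
    have hle : Real.log (n + 2) ≤ p * ((n : ℝ) + 2) ^ p⁻¹ := by
      simpa [div_inv_eq_mul, mul_comm] using Real.log_le_rpow_div hx.le (inv_pos.2 hp)
    have hle' : Real.log (n + 2) ^ p ≤ p ^ p * ((n : ℝ) + 2) := by
      calc Real.log (n + 2) ^ p ≤ (p * ((n : ℝ) + 2) ^ p⁻¹) ^ p := by gcongr
        _ = p ^ p * ((n : ℝ) + 2) := by
          rw [Real.mul_rpow hp.le (by positivity), ← Real.rpow_mul hx.le, inv_mul_cancel₀ hp.ne',
            Real.rpow_one]
    rw [Real.inv_rpow hlog.le, ← mul_inv]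
    gcongr
  intro hsum
  have : Summable fun n : ℕ => ((n : ℝ) + 2)⁻¹ :=
    (summable_mul_left_iff (by positivity)).1
      (hsum.of_nonneg_of_le (fun n => by positivity) hbound)
  refine Real.not_summable_natCast_inv ((summable_nat_add_iff 2).1 ?_)
  exact_mod_cast this

theorem isSeqClosed_range_of_isClosedEmbedding_apply {ι X : Type*} {Y : ι → Type*}
    [TopologicalSpace X] [∀ i, TopologicalSpace (Y i)] [∀ i, T2Space (Y i)]
    {f : X → ∀ i, Y i} (hf : Continuous f) {i₀ : ι} (hi₀ : IsClosedEmbedding fun x => f x i₀) :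
    IsSeqClosed (Set.range f) := by
  rintro F z hF hFz
  choose w hw using hF
  have hwz : Tendsto (fun j => f (w j) i₀) atTop (𝓝 (z i₀)) := by
    simpa only [hw] using tendsto_pi_nhds.1 hFz i₀
  obtain ⟨x, hx⟩ : z i₀ ∈ Set.range fun x => f x i₀ :=
    hi₀.isClosed_range.mem_of_tendsto hwz (Eventually.of_forall fun j => ⟨w j, rfl⟩)
  have hwx : Tendsto w atTop (𝓝 x) := hi₀.tendsto_nhds_iff.2 <| by
    simpa only [Function.comp_def, hx] using hwz
  refine ⟨x, tendsto_nhds_unique ((hf.tendsto x).comp hwx) ?_⟩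
  simpa only [Function.comp_def, hw] using hFz

theorem tendsto_pi_of_tendsto_iSup_norm_sub {ι κ : Type*} {Y : ι → Type*}
    [∀ i, SeminormedAddCommGroup (Y i)] {l : Filter κ} {F : κ → ∀ i, Y i} {z : ∀ i, Y i}
    (hbdd : ∀ j, BddAbove (Set.range fun i => ‖F j i - z i‖))
    (hFz : Tendsto (fun j => ⨆ i, ‖F j i - z i‖) l (𝓝 0)) : Tendsto F l (𝓝 z) :=
  tendsto_pi_nhds.2 fun i => tendsto_iff_norm_sub_tendsto_zero.2 <|
    squeeze_zero (fun _ => norm_nonneg _) (fun j => le_ciSup (hbdd j) i) hFz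

section WeightedDiag

variable {X : Type*} [NormedAddCommGroup X] [NormedSpace ℝ X]
  {Y : ℕ → Type*} [∀ n, NormedAddCommGroup (Y n)] [∀ n, NormedSpace ℝ (Y n)]
  (c : ℕ → ℝ) (R : ∀ n, X →L[ℝ] Y n) {δ : ℝ}

def weightedDiag : X →L[ℝ] ∀ n, Y n :=
  ContinuousLinearMap.pi fun n => c n • R n

@[simp]
theorem weightedDiag_apply (x : X) (n : ℕ) : weightedDiag c R x n = c n • R n x := rfl

variable {c R}

theorem norm_weightedDiag_apply_le (hR : ∀ n, ‖R n‖ ≤ δ) (x : X) (n : ℕ) :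
    ‖weightedDiag c R x n‖ ≤ ‖c n‖ * (δ * ‖x‖) := by
  rw [weightedDiag_apply, norm_smul]
  gcongr
  exact (R n).le_of_opNorm_le (hR n) x

theorem norm_mul_norm_le_weightedDiag_apply (hRinv : ∀ n x, ‖x‖ ≤ δ * ‖R n x‖) (x : X) (n : ℕ) :
    ‖c n‖ * ‖x‖ ≤ δ * ‖weightedDiag c R x n‖ := by
  rw [weightedDiag_apply, norm_smul, mul_left_comm]
  gcongr
  exact hRinv n x

theorem tendsto_norm_weightedDiag_apply (hc : Tendsto c atTop (𝓝 0)) (hR : ∀ n, ‖R n‖ ≤ δ)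
    (x : X) : Tendsto (fun n => ‖weightedDiag c R x n‖) atTop (𝓝 0) :=
  squeeze_zero (fun _ => norm_nonneg _) (norm_weightedDiag_apply_le hR x) <| by
    simpa using hc.norm.mul_const (δ * ‖x‖)

theorem not_summable_norm_weightedDiag_apply_rpow (hδ : 0 < δ)
    (hRinv : ∀ n x, ‖x‖ ≤ δ * ‖R n x‖) {p : ℝ} (hp : 0 ≤ p)
    (hc : ¬ Summable fun n => ‖c n‖ ^ p) {x : X} (hx : x ≠ 0) :
    ¬ Summable fun n => ‖weightedDiag c R x n‖ ^ p := by
  intro hsum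
  have hK : 0 < ‖x‖ / δ := div_pos (norm_pos_iff.2 hx) hδ
  refine hc ((summable_mul_right_iff (Real.rpow_pos_of_pos hK p).ne').1 ?_)
  refine hsum.of_nonneg_of_le (fun n => by positivity) fun n => ?_
  rw [← Real.mul_rpow (norm_nonneg _) hK.le]
  gcongr
  rw [← mul_div_assoc, div_le_iff₀' hδ]
  exact norm_mul_norm_le_weightedDiag_apply hRinv x n

theorem isClosedEmbedding_weightedDiag_apply [CompleteSpace X] (hδ : 0 ≤ δ) {n₀ : ℕ}
    (hRinv : ∀ x, ‖x‖ ≤ δ * ‖R n₀ x‖) (hc : c n₀ ≠ 0) :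
    IsClosedEmbedding fun x => weightedDiag c R x n₀ := by
  have hK : ∀ x, ‖x‖ ≤ (δ / ‖c n₀‖).toNNReal * ‖(c n₀ • R n₀) x‖ := fun x => by
    rw [Real.coe_toNNReal _ (by positivity), FunLike.coe_smul, Pi.smul_apply, norm_smul,
      ← mul_assoc, div_mul_cancel₀ _ (norm_ne_zero_iff.2 hc)]
    exact hRinv x
  exact ((c n₀ • R n₀).antilipschitz_of_bound hK).isClosedEmbedding (c n₀ • R n₀).uniformContinuous

end WeightedDiag

theorem stmt15.{u, v} (X : Type u) [NormedAddCommGroup X] [NormedSpace ℝ X]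
    [CompleteSpace X] (hX : ¬ FiniteDimensional ℝ X)
    (Y : ℕ → Type v) [∀ n, NormedAddCommGroup (Y n)] [∀ n, NormedSpace ℝ (Y n)]
    [∀ n, CompleteSpace (Y n)]
    (δ : ℝ) (hδ : 0 < δ) (R : ∀ n, X →L[ℝ] Y n)
    (hR : ∀ n, ‖R n‖ ≤ δ) (hRinv : ∀ n x, ‖x‖ ≤ δ * ‖R n x‖) :
    ∃ S : Submodule ℝ (∀ n, Y n),
      (∀ f ∈ S, Tendsto (fun n => ‖f n‖) atTop (𝓝 0)) ∧
      Cardinal.lift.{u} (Module.rank ℝ S) = Cardinal.lift.{v} (Module.rank ℝ X) ∧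
      (∀ f ∈ S, f ≠ 0 → ∀ p : ℝ, 0 < p → ¬ Summable fun n => ‖f n‖ ^ p) ∧
      (∀ z : ∀ n, Y n, Tendsto (fun n => ‖z n‖) atTop (𝓝 0) →
        (∃ F : ℕ → ∀ n, Y n, (∀ j, F j ∈ S) ∧
          Tendsto (fun j => ⨆ n, ‖F j n - z n‖) atTop (𝓝 0)) → z ∈ S) := by
  set c : ℕ → ℝ := fun n => (Real.log (n + 2))⁻¹
  have hc_pos : ∀ n, 0 < c n := fun n =>
    inv_pos.2 (Real.log_pos (by linarith [n.cast_nonneg (α := ℝ)]))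
  have hc_lim : Tendsto c atTop (𝓝 0) := tendsto_inv_atTop_zero.comp <|
    Real.tendsto_log_atTop.comp (tendsto_atTop_add_const_right _ 2 tendsto_natCast_atTop_atTop)
  have hT₀ := isClosedEmbedding_weightedDiag_apply hδ.le (hRinv 0) (hc_pos 0).ne'
  have hT_lim := tendsto_norm_weightedDiag_apply hc_lim hR
  refine ⟨LinearMap.range (weightedDiag c R : X →ₗ[ℝ] ∀ n, Y n), ?_, ?_, ?_, ?_⟩
  · rintro _ ⟨x, rfl⟩
    exact hT_lim x
  · have hT_inj : Function.Injective (weightedDiag c R) :=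
      Function.Injective.of_comp (f := fun F : ∀ n, Y n => F 0) hT₀.injective
    exact (LinearEquiv.ofInjective _ hT_inj).lift_rank_eq.symm
  · rintro _ ⟨x, rfl⟩ hx p hp
    refine not_summable_norm_weightedDiag_apply_rpow hδ hRinv hp.le ?_ (by rintro rfl; simp at hx)
    simpa only [Real.norm_of_nonneg (hc_pos _).le] using Real.not_summable_inv_log_rpow hp
  · rintro z hz ⟨F, hFS, hFz⟩
    have hbdd : ∀ j, BddAbove (Set.range fun n => ‖F j n - z n‖) := fun j => by
      obtain ⟨x, hx⟩ := hFS j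
      refine Tendsto.bddAbove_range (squeeze_zero (fun _ => norm_nonneg _)
        (fun n => norm_sub_le _ _) ?_)
      simpa [← hx] using (hT_lim x).add hz
    exact isSeqClosed_range_of_isClosedEmbedding_apply (weightedDiag c R).continuous hT₀ hFS
      (tendsto_pi_of_tendsto_iSup_norm_sub hbdd hFz)
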